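/- Let h ∈ ℂ with h ∉ 2πi·ℚ, q := exp(h), and let p, r, ℓ₀, m₀ ∈ ℂ satisfy, for all k ∈ ℤ: q^{2m₀+k} ≠ −1, q^{2ℓ₀+2k} ≠ 1, q^{4ℓ₀+2k} ≠ 1, and moreover q^{2p+2ℓ₀+2k} ≠ 1, q^{2p−2ℓ₀+2k} ≠ 1, q^{2ℓ₀+2r+2k} ≠ 1, q^{2ℓ₀−2r+2k} ≠ 1, q^{2ℓ₀+2m₀+2k} ≠ 1, and q^{2ℓ₀−2m₀+2k} ≠ 1. Then the generic Gelfand–Tsetlin representation V^{p,r}_{ℓ₀,m₀} is irreducible: every ℂ-linear subspace of V = ⊕_{(j,k)∈ℤ×ℤ} ℂ·e_{j,k} invariant under I₂₁, I₃₂ and I₄₃ is either 0 or all of V. -/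

import Mathlib

/-- `q^b := exp(h·b)`. -/
noncomputable def qpow (h b : ℂ) : ℂ := Complex.exp (h * b)

/-- the q-number `[b] := (q^b − q^{−b})/(q − q^{−1})` where `q = exp h`. -/
noncomputable def qnum (h b : ℂ) : ℂ :=
  (Complex.exp (h * b) - Complex.exp (-(h * b))) / (Complex.exp h - Complex.exp (-h))

/-- `a_{ℓ,m} := [ℓ+m+1][ℓ−m]/((q^m+q^{−m})(q^{m+1}+q^{−m−1}))`. -/
noncomputable def coefA (h ℓ m : ℂ) : ℂ :=
  qnum h (ℓ + m + 1) * qnum h (ℓ - m) /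
    ((qpow h m + qpow h (-m)) * (qpow h (m + 1) + qpow h (-(m + 1))))

/-- `b_{ℓ,m} := [p+ℓ+2][p−ℓ][ℓ+r+1][ℓ−r+1][ℓ+m+1]/([ℓ+1]²[2ℓ+1][2ℓ+3])`. -/
noncomputable def coefB (h p r ℓ m : ℂ) : ℂ :=
  qnum h (p + ℓ + 2) * qnum h (p - ℓ) * qnum h (ℓ + r + 1) * qnum h (ℓ - r + 1) *
      qnum h (ℓ + m + 1) /
    (qnum h (ℓ + 1) ^ 2 * qnum h (2 * ℓ + 1) * qnum h (2 * ℓ + 3))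

/-- `c_{ℓ,m} := [p+1][r][m]/([ℓ+1][ℓ])`. -/
noncomputable def coefC (h p r ℓ m : ℂ) : ℂ :=
  qnum h (p + 1) * qnum h r * qnum h m / (qnum h (ℓ + 1) * qnum h ℓ)

/-!
The weight operator `I₂₁` is diagonal with eigenvalue `i[m₀+k]` on the row `k`, and these
eigenvalues are pairwise distinct, so an invariant subspace `U` is stable under the projections onto
rows. Inside row `k`, the operator `(row k) ∘ I₃₂ ∘ (row k+1) ∘ I₃₂ ∘ (row k)` is again diagonal,
with pairwise distinct eigenvalues `-a_{ℓ₀+j, m₀+k}`; hence `U` contains every coordinate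
`v_{j,k} e_{j,k}` of each of its vectors. A nonzero `U` thus contains a basis vector `e_{j,k}`, and
the coefficients `a`, `-1` of `I₃₂` and `b`, `-[ℓ-m]` of `I₄₃`, all nonzero under the genericity
conditions, move it to the four neighbours of `(j, k)`; so `U` contains every basis vector.
-/

open Polynomial Finsupp Function

theorem Finsupp.apply_apply_of_diagonal {ι K : Type*} [Field K] {T : Module.End K (ι →₀ K)}
    {μ : ι → K} (hT : ∀ i, T (single i 1) = μ i • single i 1) (v : ι →₀ K) (i : ι) :
    T v i = μ i * v i := by
  classical
  induction v using Finsupp.induction_linear with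
  | zero => simp
  | add v w hv hw => simp [hv, hw, mul_add]
  | single a x =>
    rw [← mul_one x, ← smul_single', map_smul, hT]
    by_cases hai : a = i
    · subst hai; simp [mul_comm]
    · simp [hai]

/-- Up to the factor `p(c) ≠ 0`, the part of `v` in the `c`-eigenspace is `p(T) v`, where `p`
vanishes at the other eigenvalues occurring in `v`. -/
theorem Submodule.filter_mem_of_diagonal {ι K : Type*} [Field K] [DecidableEq K]
    {T : Module.End K (ι →₀ K)} {μ : ι → K} (hT : ∀ i, T (single i 1) = μ i • single i 1)
    {U : Submodule K (ι →₀ K)} (hU : ∀ v ∈ U, T v ∈ U) {v : ι →₀ K} (hv : v ∈ U) (c : K) :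
    v.filter (μ · = c) ∈ U := by
  set p : K[X] := ∏ x ∈ (v.support.image μ).erase c, (X - C x)
  have hpc : p.eval c ≠ 0 := by
    simp only [p, eval_prod, eval_sub, eval_X, eval_C]
    exact Finset.prod_ne_zero_iff.mpr fun x hx => sub_ne_zero.mpr (Finset.ne_of_mem_erase hx).symm
  have hpv : aeval T p v = p.eval c • v.filter (μ · = c) := by
    ext i
    rw [apply_apply_of_diagonal (fun i => Module.End.aeval_apply_of_mem_apply_eq_smul (hT i)),
      Finsupp.smul_apply, filter_apply, smul_eq_mul]
    split_ifs with hi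
    · rw [hi]
    by_cases hvi : v i = 0
    · simp [hvi]
    have hroot : p.eval (μ i) = 0 := by
      simp only [p, eval_prod, eval_sub, eval_X, eval_C]
      exact Finset.prod_eq_zero (Finset.mem_erase.mpr ⟨hi, Finset.mem_image_of_mem μ
        (mem_support_iff.mpr hvi)⟩) (sub_self _)
    simp [hroot]
  have hmem := U.smul_mem (p.eval c)⁻¹ (aeval_apply_smul_mem_of_le_comap hv p T hU)
  rwa [hpv, smul_smul, inv_mul_cancel₀ hpc, one_smul] at hmem

theorem Submodule.eq_top_of_single_mem_of_shift {K : Type*} [Field K]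
    {U : Submodule K (ℤ × ℤ →₀ K)} {j₀ k₀ : ℤ} (h₀ : single (j₀, k₀) 1 ∈ U)
    (hj : ∀ j k, single (j, k) (1 : K) ∈ U → single (j + 1, k) 1 ∈ U ∧ single (j - 1, k) 1 ∈ U)
    (hk : ∀ j k, single (j, k) (1 : K) ∈ U → single (j, k + 1) 1 ∈ U ∧ single (j, k - 1) 1 ∈ U) :
    U = ⊤ := by
  have hall : ∀ j k, single (j, k) (1 : K) ∈ U := by
    intro j k
    have hrow : single (j, k₀) (1 : K) ∈ U :=
      Int.inductionOn' j j₀ h₀ (fun _ _ hi => (hj _ _ hi).1) (fun _ _ hi => (hj _ _ hi).2)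
    exact Int.inductionOn' k k₀ hrow (fun _ _ hi => (hk _ _ hi).1) (fun _ _ hi => (hk _ _ hi).2)
  rw [eq_top_iff, ← (Finsupp.basisSingleOne (R := K)).span_eq, Submodule.span_le]
  rintro _ ⟨⟨j, k⟩, rfl⟩
  simpa using hall j k

namespace GelfandTsetlin

variable {K : Type*} [Field K]

def rowProj (k : ℤ) : Module.End K (ℤ × ℤ →₀ K) where
  toFun v := v.filter (·.2 = k)
  map_add' _ _ := filter_add
  map_smul' _ _ := filter_smul

theorem rowProj_apply (k : ℤ) (v : ℤ × ℤ →₀ K) (a : ℤ × ℤ) :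
    rowProj k v a = if a.2 = k then v a else 0 :=
  filter_apply _ _ _

theorem rowProj_single (k : ℤ) (a : ℤ × ℤ) (x : K) :
    rowProj k (single a x) = if a.2 = k then single a x else 0 := by
  split_ifs with ha
  · exact filter_single_of_pos _ ha
  · exact filter_single_of_neg _ ha

variable {D E F : Module.End K (ℤ × ℤ →₀ K)} {μ : ℤ → K} {α β γ δ : ℤ → ℤ → K}
  {U : Submodule K (ℤ × ℤ →₀ K)}

theorem rowProj_mem (hμ : Injective μ)
    (hD : ∀ j k, D (single (j, k) 1) = μ k • single (j, k) 1) (hUD : ∀ v ∈ U, D v ∈ U)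
    (k : ℤ) {v : ℤ × ℤ →₀ K} (hv : v ∈ U) : rowProj k v ∈ U := by
  classical
  convert Submodule.filter_mem_of_diagonal (μ := fun a => μ a.2) (fun a => hD a.1 a.2) hUD hv
    (μ k) using 1
  ext a
  simp [rowProj_apply, filter_apply, hμ.eq_iff]

theorem single_apply_mem (hμ : Injective μ)
    (hD : ∀ j k, D (single (j, k) 1) = μ k • single (j, k) 1)
    (hE : ∀ j k, E (single (j, k) 1) = α j k • single (j, k + 1) 1 - single (j, k - 1) 1)
    (hα : ∀ k, Injective (α · k)) (hUD : ∀ v ∈ U, D v ∈ U) (hUE : ∀ v ∈ U, E v ∈ U)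
    {v : ℤ × ℤ →₀ K} (hv : v ∈ U) (a : ℤ × ℤ) : single a (v a) ∈ U := by
  classical
  obtain ⟨j, k⟩ := a
  set P := rowProj k ∘ₗ E ∘ₗ rowProj (k + 1) ∘ₗ E ∘ₗ rowProj k
  have hP : ∀ b : ℤ × ℤ, P (single b 1) = (if b.2 = k then -α b.1 k else 0) • single b 1 := by
    rintro ⟨j', k'⟩
    by_cases hk' : k' = k
    · subst hk'
      have h1 : k' - 1 ≠ k' + 1 := by omega
      have h2 : k' + 1 + 1 ≠ k' := by omega
      simp [P, rowProj_single, hE, h1, h2, -smul_single]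
    · simp [P, rowProj_single, hk']
  have hPU : ∀ w ∈ U, P w ∈ U := fun w hw =>
    rowProj_mem hμ hD hUD _ (hUE _ (rowProj_mem hμ hD hUD _ (hUE _ (rowProj_mem hμ hD hUD _ hw))))
  convert Submodule.filter_mem_of_diagonal hP hPU (rowProj_mem hμ hD hUD k hv) (-α j k) using 1
  ext ⟨j', k'⟩
  by_cases hk' : k' = k
  · subst hk'
    by_cases hj' : j' = j
    · subst hj'; simp [rowProj_apply]
    · simp [(hα k').eq_iff, hj']
  · simp [rowProj_apply, filter_apply, hk']

theorem eq_bot_or_eq_top (hμ : Injective μ)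
    (hD : ∀ j k, D (single (j, k) 1) = μ k • single (j, k) 1)
    (hE : ∀ j k, E (single (j, k) 1) = α j k • single (j, k + 1) 1 - single (j, k - 1) 1)
    (hα₀ : ∀ j k, α j k ≠ 0) (hα : ∀ k, Injective (α · k))
    (hF : ∀ j k, F (single (j, k) 1) =
      β j k • single (j + 1, k) 1 - γ j k • single (j - 1, k) 1 + δ j k • single (j, k) 1)
    (hβ : ∀ j k, β j k ≠ 0) (hγ : ∀ j k, γ j k ≠ 0)
    (hUD : ∀ v ∈ U, D v ∈ U) (hUE : ∀ v ∈ U, E v ∈ U) (hUF : ∀ v ∈ U, F v ∈ U) :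
    U = ⊥ ∨ U = ⊤ := by
  have hone : ∀ v ∈ U, ∀ a, v a ≠ 0 → single a 1 ∈ U := fun v hv a ha => by
    simpa [smul_single, ha] using U.smul_mem (v a)⁻¹ (single_apply_mem hμ hD hE hα hUD hUE hv a)
  refine or_iff_not_imp_left.mpr fun hU => ?_
  obtain ⟨v, hv, hv0⟩ := (Submodule.ne_bot_iff U).mp hU
  obtain ⟨⟨j₀, k₀⟩, ha⟩ := Finsupp.ne_iff.mp hv0
  refine Submodule.eq_top_of_single_mem_of_shift (hone v hv _ ha) (fun j k hjk => ⟨?_, ?_⟩)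
    (fun j k hjk => ⟨?_, ?_⟩)
  · refine hone _ (hUF _ hjk) _ ?_
    simp [hF, hβ, show j - 1 ≠ j + 1 by omega]
  · refine hone _ (hUF _ hjk) _ ?_
    simp [hF, hγ, show j + 1 ≠ j - 1 by omega]
  · refine hone _ (hUE _ hjk) _ ?_
    simp [hE, hα₀, show k - 1 ≠ k + 1 by omega]
  · refine hone _ (hUE _ hjk) _ ?_
    simp [hE, show k + 1 ≠ k - 1 by omega]

end GelfandTsetlin

section Field

variable {K : Type*} [Field K] {x y : K}

theorem sub_inv_eq_zero_iff (hx : x ≠ 0) : x - x⁻¹ = 0 ↔ x ^ 2 = 1 := by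
  rw [show x - x⁻¹ = (x ^ 2 - 1) / x by field_simp, div_eq_zero_iff, or_iff_left hx, sub_eq_zero]

theorem add_inv_eq_zero_iff (hx : x ≠ 0) : x + x⁻¹ = 0 ↔ x ^ 2 = -1 := by
  rw [show x + x⁻¹ = (x ^ 2 + 1) / x by field_simp, div_eq_zero_iff, or_iff_left hx,
    add_eq_zero_iff_eq_neg]

theorem sub_inv_eq_sub_inv_iff (hx : x ≠ 0) (hy : y ≠ 0) :
    x - x⁻¹ = y - y⁻¹ ↔ x = y ∨ x * y = -1 := by
  have key : x - x⁻¹ - (y - y⁻¹) = (x - y) * (x * y + 1) / (x * y) := by field_simp; ring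
  rw [← sub_eq_zero, key, div_eq_zero_iff, or_iff_left (mul_ne_zero hx hy), mul_eq_zero,
    sub_eq_zero, add_eq_zero_iff_eq_neg]

theorem add_inv_eq_add_inv_iff (hx : x ≠ 0) (hy : y ≠ 0) :
    x + x⁻¹ = y + y⁻¹ ↔ x = y ∨ x * y = 1 := by
  have key : x + x⁻¹ - (y + y⁻¹) = (x - y) * (x * y - 1) / (x * y) := by field_simp; ring
  rw [← sub_eq_zero, key, div_eq_zero_iff, or_iff_left (mul_ne_zero hx hy), mul_eq_zero,
    sub_eq_zero, sub_eq_zero]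

end Field

section QNumber

variable {h a b : ℂ}

theorem qpow_ne_zero (h b : ℂ) : qpow h b ≠ 0 := Complex.exp_ne_zero _

theorem qpow_add (h a b : ℂ) : qpow h (a + b) = qpow h a * qpow h b := by
  simp [qpow, mul_add, Complex.exp_add]

theorem qpow_sub (h a b : ℂ) : qpow h (a - b) = qpow h a / qpow h b := by
  simp [qpow, mul_sub, Complex.exp_sub]

theorem qpow_neg (h b : ℂ) : qpow h (-b) = (qpow h b)⁻¹ := by
  simp [qpow, Complex.exp_neg]

theorem qpow_two_mul (h b : ℂ) : qpow h (2 * b) = qpow h b ^ 2 := by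
  rw [two_mul, qpow_add, sq]

theorem qnum_eq (h b : ℂ) :
    qnum h b = (qpow h b - (qpow h b)⁻¹) / (qpow h 1 - (qpow h 1)⁻¹) := by
  simp [qnum, qpow, Complex.exp_neg]

theorem qpow_int_ne_one (hh : ∀ r' : ℚ, h ≠ 2 * Real.pi * Complex.I * r') {n : ℤ} (hn : n ≠ 0) :
    qpow h n ≠ 1 := by
  rw [qpow, Ne, Complex.exp_eq_one_iff]
  rintro ⟨m, hm⟩
  refine hh (m / n) ?_
  push_cast
  field_simp
  linear_combination hm

theorem qpow_sub_inv_ne_zero (hb : qpow h (2 * b) ≠ 1) : qpow h b - (qpow h b)⁻¹ ≠ 0 := by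
  rwa [Ne, sub_inv_eq_zero_iff (qpow_ne_zero _ _), ← qpow_two_mul]

theorem qpow_one_sub_inv_ne_zero (hq : qpow h 2 ≠ 1) : qpow h 1 - (qpow h 1)⁻¹ ≠ 0 :=
  qpow_sub_inv_ne_zero (by rwa [mul_one])

theorem qnum_ne_zero (hq : qpow h 2 ≠ 1) (hb : qpow h (2 * b) ≠ 1) : qnum h b ≠ 0 := by
  rw [qnum_eq]
  exact div_ne_zero (qpow_sub_inv_ne_zero hb) (qpow_one_sub_inv_ne_zero hq)

theorem qpow_add_qpow_neg_ne_zero (hb : qpow h (2 * b) ≠ -1) : qpow h b + qpow h (-b) ≠ 0 := by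
  rwa [qpow_neg, Ne, add_inv_eq_zero_iff (qpow_ne_zero _ _), ← qpow_two_mul]

theorem qpow_eq_or_of_qnum_eq (hq : qpow h 2 ≠ 1) (hab : qnum h a = qnum h b) :
    qpow h (a - b) = 1 ∨ qpow h (a + b) = -1 := by
  rw [qnum_eq, qnum_eq, div_left_inj' (qpow_one_sub_inv_ne_zero hq),
    sub_inv_eq_sub_inv_iff (qpow_ne_zero _ _) (qpow_ne_zero _ _)] at hab
  rw [qpow_sub, qpow_add, div_eq_one_iff_eq (qpow_ne_zero _ _)]
  exact hab

theorem qpow_eq_or_of_qpow_add_qpow_neg_eq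
    (hab : qpow h a + qpow h (-a) = qpow h b + qpow h (-b)) :
    qpow h (a - b) = 1 ∨ qpow h (a + b) = 1 := by
  rw [qpow_neg, qpow_neg, add_inv_eq_add_inv_iff (qpow_ne_zero _ _) (qpow_ne_zero _ _)] at hab
  rw [qpow_sub, qpow_add, div_eq_one_iff_eq (qpow_ne_zero _ _)]
  exact hab

theorem qnum_mul_qnum_mul_sq (hq : qpow h 2 ≠ 1) (ℓ m : ℂ) :
    qnum h (ℓ + m + 1) * qnum h (ℓ - m) * (qpow h 1 - qpow h (-1)) ^ 2 =
      qpow h (2 * ℓ + 1) + qpow h (-(2 * ℓ + 1)) - (qpow h (2 * m + 1) + qpow h (-(2 * m + 1))) := by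
  have hw : qpow h 1 ^ 2 - 1 ≠ 0 := sub_ne_zero.mpr (by rwa [← qpow_two_mul, mul_one])
  have := qpow_ne_zero h ℓ
  have := qpow_ne_zero h m
  have := qpow_ne_zero h 1
  simp only [qnum_eq, qpow_neg, qpow_add, qpow_sub, qpow_two_mul]
  field_simp
  ring

theorem coefA_ne_zero {ℓ m : ℂ} (hq : qpow h 2 ≠ 1) (h₁ : qpow h (2 * (ℓ + m + 1)) ≠ 1)
    (h₂ : qpow h (2 * (ℓ - m)) ≠ 1) (h₃ : qpow h (2 * m) ≠ -1) (h₄ : qpow h (2 * (m + 1)) ≠ -1) :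
    coefA h ℓ m ≠ 0 :=
  div_ne_zero (mul_ne_zero (qnum_ne_zero hq h₁) (qnum_ne_zero hq h₂))
    (mul_ne_zero (qpow_add_qpow_neg_ne_zero h₃) (qpow_add_qpow_neg_ne_zero h₄))

theorem qpow_eq_or_of_coefA_eq {ℓ ℓ' m : ℂ} (hq : qpow h 2 ≠ 1) (h₃ : qpow h (2 * m) ≠ -1)
    (h₄ : qpow h (2 * (m + 1)) ≠ -1) (hA : coefA h ℓ m = coefA h ℓ' m) :
    qpow h (2 * (ℓ - ℓ')) = 1 ∨ qpow h (2 * (ℓ + ℓ' + 1)) = 1 := by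
  rw [coefA, coefA, div_left_inj'
    (mul_ne_zero (qpow_add_qpow_neg_ne_zero h₃) (qpow_add_qpow_neg_ne_zero h₄))] at hA
  have hcosh := congrArg (· * (qpow h 1 - qpow h (-1)) ^ 2) hA
  simp only [qnum_mul_qnum_mul_sq hq, sub_left_inj] at hcosh
  convert qpow_eq_or_of_qpow_add_qpow_neg_eq hcosh using 3 <;> ring

end QNumber

section Lattice

variable {h p r ℓ₀ m₀ : ℂ}

theorem I_mul_qnum_add_int_injective (hq : ∀ n : ℤ, n ≠ 0 → qpow h n ≠ 1)
    (hm : ∀ k : ℤ, qpow h (2 * m₀ + k) ≠ -1) :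
    Function.Injective fun k : ℤ => Complex.I * qnum h (m₀ + k) := by
  intro k k' hkk
  by_contra hne
  rcases qpow_eq_or_of_qnum_eq (by exact_mod_cast hq 2 two_ne_zero)
    (mul_left_cancel₀ Complex.I_ne_zero hkk) with h₁ | h₁
  · exact hq (k - k') (sub_ne_zero.mpr hne) (by convert h₁ using 2; push_cast; ring)
  · exact hm (k + k') (by convert h₁ using 2; push_cast; ring)

theorem coefA_add_int_ne_zero (hq : qpow h 2 ≠ 1) (hm : ∀ k : ℤ, qpow h (2 * m₀ + k) ≠ -1)
    (hg5 : ∀ k : ℤ, qpow h (2 * ℓ₀ + 2 * m₀ + 2 * k) ≠ 1)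
    (hg6 : ∀ k : ℤ, qpow h (2 * ℓ₀ - 2 * m₀ + 2 * k) ≠ 1) (j k : ℤ) :
    coefA h (ℓ₀ + j) (m₀ + k) ≠ 0 :=
  coefA_ne_zero hq (by convert hg5 (j + k + 1) using 2; push_cast; ring)
    (by convert hg6 (j - k) using 2; push_cast; ring)
    (by convert hm (2 * k) using 2; push_cast; ring)
    (by convert hm (2 * k + 2) using 2; push_cast; ring)

theorem coefA_add_int_injective (hq : ∀ n : ℤ, n ≠ 0 → qpow h n ≠ 1)
    (hm : ∀ k : ℤ, qpow h (2 * m₀ + k) ≠ -1) (hl2 : ∀ k : ℤ, qpow h (4 * ℓ₀ + 2 * k) ≠ 1)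
    (k : ℤ) : Function.Injective fun j : ℤ => coefA h (ℓ₀ + j) (m₀ + k) := by
  intro j j' hjj
  by_contra hne
  rcases qpow_eq_or_of_coefA_eq (by exact_mod_cast hq 2 two_ne_zero)
    (by convert hm (2 * k) using 2; push_cast; ring)
    (by convert hm (2 * k + 2) using 2; push_cast; ring) hjj with h₁ | h₁
  · exact hq (2 * (j - j')) (by omega) (by convert h₁ using 2; push_cast; ring)
  · exact hl2 (j + j' + 1) (by convert h₁ using 2; push_cast; ring)

theorem coefB_add_int_ne_zero (hq : qpow h 2 ≠ 1)
    (hl1 : ∀ k : ℤ, qpow h (2 * ℓ₀ + 2 * k) ≠ 1)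
    (hl2 : ∀ k : ℤ, qpow h (4 * ℓ₀ + 2 * k) ≠ 1)
    (hg1 : ∀ k : ℤ, qpow h (2 * p + 2 * ℓ₀ + 2 * k) ≠ 1)
    (hg2 : ∀ k : ℤ, qpow h (2 * p - 2 * ℓ₀ + 2 * k) ≠ 1)
    (hg3 : ∀ k : ℤ, qpow h (2 * ℓ₀ + 2 * r + 2 * k) ≠ 1)
    (hg4 : ∀ k : ℤ, qpow h (2 * ℓ₀ - 2 * r + 2 * k) ≠ 1)
    (hg5 : ∀ k : ℤ, qpow h (2 * ℓ₀ + 2 * m₀ + 2 * k) ≠ 1) (j k : ℤ) :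
    coefB h p r (ℓ₀ + j) (m₀ + k) ≠ 0 := by
  refine div_ne_zero (mul_ne_zero (mul_ne_zero (mul_ne_zero (mul_ne_zero ?_ ?_) ?_) ?_) ?_)
    (mul_ne_zero (mul_ne_zero (pow_ne_zero _ ?_) ?_) ?_) <;> refine qnum_ne_zero hq ?_
  · convert hg1 (j + 2) using 2; push_cast; ring
  · convert hg2 (-j) using 2; push_cast; ring
  · convert hg3 (j + 1) using 2; push_cast; ring
  · convert hg4 (j + 1) using 2; push_cast; ring
  · convert hg5 (j + k + 1) using 2; push_cast; ring
  · convert hl1 (j + 1) using 2; push_cast; ring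
  · convert hl2 (2 * j + 1) using 2; push_cast; ring
  · convert hl2 (2 * j + 3) using 2; push_cast; ring

end Lattice

theorem stmt_17 (h : ℂ) (hh : ∀ r' : ℚ, h ≠ 2 * Real.pi * Complex.I * r')
    (p r ℓ₀ m₀ : ℂ)
    (hm : ∀ k : ℤ, qpow h (2 * m₀ + k) ≠ -1)
    (hl1 : ∀ k : ℤ, qpow h (2 * ℓ₀ + 2 * k) ≠ 1)
    (hl2 : ∀ k : ℤ, qpow h (4 * ℓ₀ + 2 * k) ≠ 1)
    (hg1 : ∀ k : ℤ, qpow h (2 * p + 2 * ℓ₀ + 2 * k) ≠ 1)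
    (hg2 : ∀ k : ℤ, qpow h (2 * p - 2 * ℓ₀ + 2 * k) ≠ 1)
    (hg3 : ∀ k : ℤ, qpow h (2 * ℓ₀ + 2 * r + 2 * k) ≠ 1)
    (hg4 : ∀ k : ℤ, qpow h (2 * ℓ₀ - 2 * r + 2 * k) ≠ 1)
    (hg5 : ∀ k : ℤ, qpow h (2 * ℓ₀ + 2 * m₀ + 2 * k) ≠ 1)
    (hg6 : ∀ k : ℤ, qpow h (2 * ℓ₀ - 2 * m₀ + 2 * k) ≠ 1)
    (I21 I32 I43 : Module.End ℂ (ℤ × ℤ →₀ ℂ))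
    (hI21 : ∀ j k : ℤ, I21 (Finsupp.single (j, k) 1) =
      (Complex.I * qnum h (m₀ + k)) • Finsupp.single (j, k) 1)
    (hI32 : ∀ j k : ℤ, I32 (Finsupp.single (j, k) 1) =
      coefA h (ℓ₀ + j) (m₀ + k) • Finsupp.single (j, k + 1) 1
        - Finsupp.single (j, k - 1) 1)
    (hI43 : ∀ j k : ℤ, I43 (Finsupp.single (j, k) 1) =
      coefB h p r (ℓ₀ + j) (m₀ + k) • Finsupp.single (j + 1, k) 1
        - qnum h ((ℓ₀ + j) - (m₀ + k)) • Finsupp.single (j - 1, k) 1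
        + (Complex.I * coefC h p r (ℓ₀ + j) (m₀ + k)) • Finsupp.single (j, k) 1)
    (U : Submodule ℂ (ℤ × ℤ →₀ ℂ))
    (hU21 : ∀ v ∈ U, I21 v ∈ U) (hU32 : ∀ v ∈ U, I32 v ∈ U)
    (hU43 : ∀ v ∈ U, I43 v ∈ U) :
    U = ⊥ ∨ U = ⊤ := by
  have hq : ∀ n : ℤ, n ≠ 0 → qpow h n ≠ 1 := fun n hn => qpow_int_ne_one hh hn
  have hq₂ : qpow h 2 ≠ 1 := by exact_mod_cast hq 2 two_ne_zero
  exact GelfandTsetlin.eq_bot_or_eq_top (I_mul_qnum_add_int_injective hq hm) hI21 hI32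
    (coefA_add_int_ne_zero hq₂ hm hg5 hg6) (coefA_add_int_injective hq hm hl2) hI43
    (coefB_add_int_ne_zero hq₂ hl1 hl2 hg1 hg2 hg3 hg4 hg5)
    (fun j k => qnum_ne_zero hq₂ (by convert hg6 (j - k) using 2; push_cast; ring))
    hU21 hU32 hU43
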